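/- Suppose 𝔰 has a canonical basis X_2, …, X_d and that YX − XY ∈ 𝔰 holds for all X ∈ 𝔰. Then for all ξ, ξ' ∈ ℝ^d with ξ_1 ≠ 0 and ξ'_1 ≠ 0 there exists exactly one h ∈ H with h^T ξ = ξ'; moreover (h^T ξ)_1 ≠ 0 for every h ∈ H and every ξ with ξ_1 ≠ 0. In particular, the dual action of H admits the single open orbit O = {ξ ∈ ℝ^d : ξ_1 ≠ 0} = {h^T e_1 : h ∈ H}, on which H acts freely. -/

import Mathlib

/-!
The dual action is `ξ ↦ ξ ᵥ* h`. For `h = ε • exp (rY) * (1 + Z)` and `η = ξ ᵥ* exp (rY)` it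
reads `ε • (η + η ᵥ* Z)`, and since `Z` has zero first column its first coordinate is
`ε * exp r * ξ 0`; this determines `ε` and `r`. What remains is that `Z ↦ η ᵥ* Z` maps `𝔰`
bijectively onto `{v | v 0 = 0}` when `η 0 ≠ 0`. Now `η ᵥ* Z` is the first row of `M * Z`, where
`M = η 0 • 1 + ∑ η i • X i` has first row `η` and is triangular with diagonal `η 0`, hence
invertible. Left multiplication by `M` is injective on `𝔰`, so bijective by finite dimension, and
the first-row map is a bijection of `𝔰` onto `{v | v 0 = 0}` by the canonical basis.
-/

open Matrix

/-- The shearlet dilation group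
`H = {ε·exp(rY)·(I_d + X) : ε ∈ {±1}, r ∈ ℝ, X ∈ 𝔰}`, where `Y = diag(1, λ_2, …, λ_d)`. -/
def shearletGroupSet (d : ℕ) (lam : Fin d → ℝ)
    (𝔰 : Submodule ℝ (Matrix (Fin d) (Fin d) ℝ)) : Set (Matrix (Fin d) (Fin d) ℝ) :=
  {h | ∃ ε r : ℝ, ∃ Z ∈ 𝔰, (ε = 1 ∨ ε = -1) ∧
    h = ε • (NormedSpace.exp (r • Matrix.diagonal lam) * (1 + Z))}

lemma isUnit_det_smul_one_add {n K : Type*} [Fintype n] [LinearOrder n] [Field K]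
    {c : K} (hc : c ≠ 0) {A : Matrix n n K} (hA : ∀ j k, k ≤ j → A j k = 0) :
    IsUnit (c • 1 + A).det := by
  have htri : (c • 1 + A).BlockTriangular id := fun i j hji => by
    simp [one_apply_ne (show i ≠ j from hji.ne'), hA i j hji.le]
  rw [det_of_isUpperTriangular htri, isUnit_iff_ne_zero]
  exact Finset.prod_ne_zero_iff.mpr fun i _ => by simpa [hA i i le_rfl] using hc

lemma exp_smul_diagonal {d : ℕ} (r : ℝ) (lam : Fin d → ℝ) :
    NormedSpace.exp (r • diagonal lam) = diagonal fun i => Real.exp (r * lam i) := by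
  rw [← diagonal_smul, exp_diagonal]
  congr 1
  funext i
  rw [Pi.coe_exp, Pi.smul_apply, smul_eq_mul, Real.exp_eq_exp_ℝ]

lemma exists_sign_mul_exp_eq {t : ℝ} (ht : t ≠ 0) :
    ∃ ε r : ℝ, (ε = 1 ∨ ε = -1) ∧ ε * Real.exp r = t := by
  rcases ht.lt_or_gt with h | h
  · exact ⟨-1, Real.log (-t), Or.inr rfl, by rw [Real.exp_log (neg_pos.mpr h)]; ring⟩
  · exact ⟨1, Real.log t, Or.inl rfl, by rw [Real.exp_log h, one_mul]⟩

lemma sign_mul_exp_injective {ε ε' r r' : ℝ} (hε : ε = 1 ∨ ε = -1) (hε' : ε' = 1 ∨ ε' = -1)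
    (h : ε * Real.exp r = ε' * Real.exp r') : ε = ε' ∧ r = r' := by
  have := Real.exp_pos r
  have := Real.exp_pos r'
  rcases hε with rfl | rfl <;> rcases hε' with rfl | rfl
  · exact ⟨rfl, Real.exp_injective (by linarith)⟩
  · linarith
  · linarith
  · exact ⟨rfl, Real.exp_injective (by linarith)⟩

lemma vecMul_smul_mul_one_add {n : Type*} [Fintype n] [DecidableEq n] (ξ : n → ℝ) (ε : ℝ)
    (E Z : Matrix n n ℝ) : ξ ᵥ* (ε • (E * (1 + Z))) = ε • (ξ ᵥ* E + (ξ ᵥ* E) ᵥ* Z) := by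
  rw [vecMul_smul, ← vecMul_vecMul, vecMul_add, vecMul_one]

section

variable {d : ℕ} [NeZero d]

lemma vecMul_apply_zero_eq_zero {Z : Matrix (Fin d) (Fin d) ℝ} (hZ : ∀ k, Z k 0 = 0)
    (η : Fin d → ℝ) : (η ᵥ* Z) 0 = 0 := by
  simp [vecMul, dotProduct, hZ]

/-- Indices are shifted: the paper's `X_2, …, X_d` are the `X i` with `i ≠ 0`, and its first row
is row `0`. -/
structure IsCanonicalBasis (𝔰 : Submodule ℝ (Matrix (Fin d) (Fin d) ℝ))
    (X : Fin d → Matrix (Fin d) (Fin d) ℝ) : Prop where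
  mem : ∀ i : Fin d, i ≠ 0 → X i ∈ 𝔰
  row : ∀ i : Fin d, i ≠ 0 → ∀ k : Fin d, X i 0 k = if k = i then 1 else 0
  span : ∀ Z ∈ 𝔰, ∃ c : Fin d → ℝ, Z = ∑ i ∈ Finset.univ.erase 0, c i • X i

namespace IsCanonicalBasis

variable {𝔰 : Submodule ℝ (Matrix (Fin d) (Fin d) ℝ)} {X : Fin d → Matrix (Fin d) (Fin d) ℝ}

lemma sum_mem (hX : IsCanonicalBasis 𝔰 X) (c : Fin d → ℝ) :
    ∑ i ∈ Finset.univ.erase 0, c i • X i ∈ 𝔰 :=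
  Submodule.sum_mem _ fun i hi => Submodule.smul_mem _ _ (hX.mem i (Finset.ne_of_mem_erase hi))

lemma sum_apply_zero (hX : IsCanonicalBasis 𝔰 X) (c : Fin d → ℝ) (k : Fin d) :
    (∑ i ∈ Finset.univ.erase 0, c i • X i) 0 k = if k = 0 then 0 else c k := by
  rw [Matrix.sum_apply, Finset.sum_congr rfl fun i hi => by
    rw [Matrix.smul_apply, hX.row i (Finset.ne_of_mem_erase hi), smul_eq_mul, mul_ite, mul_one,
      mul_zero]]
  split_ifs with hk <;> simp [hk]

lemma eq_zero_of_row_zero (hX : IsCanonicalBasis 𝔰 X) {Z : Matrix (Fin d) (Fin d) ℝ}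
    (hZ : Z ∈ 𝔰) (h0 : Z 0 = 0) : Z = 0 := by
  obtain ⟨c, rfl⟩ := hX.span Z hZ
  refine Finset.sum_eq_zero fun i hi => ?_
  have hci := congrFun h0 i
  rw [hX.sum_apply_zero, if_neg (Finset.ne_of_mem_erase hi)] at hci
  rw [hci, Pi.zero_apply, zero_smul]

def rowLift (X : Fin d → Matrix (Fin d) (Fin d) ℝ) (η : Fin d → ℝ) : Matrix (Fin d) (Fin d) ℝ :=
  η 0 • 1 + ∑ i ∈ Finset.univ.erase 0, η i • X i

lemma rowLift_apply_zero (hX : IsCanonicalBasis 𝔰 X) (η : Fin d → ℝ) : rowLift X η 0 = η := by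
  funext k
  rw [rowLift, Matrix.add_apply, Matrix.smul_apply, hX.sum_apply_zero]
  by_cases hk : k = 0
  · subst hk; simp
  · simp [hk, one_apply_ne' hk]

lemma vecMul_eq_rowLift_mul_apply_zero (hX : IsCanonicalBasis 𝔰 X) (η : Fin d → ℝ)
    (Z : Matrix (Fin d) (Fin d) ℝ) : η ᵥ* Z = (rowLift X η * Z) 0 := by
  rw [mul_apply_eq_vecMul, hX.rowLift_apply_zero]

lemma rowLift_mul_mem (hX : IsCanonicalBasis 𝔰 X) (hmul : ∀ A ∈ 𝔰, ∀ B ∈ 𝔰, A * B ∈ 𝔰)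
    (η : Fin d → ℝ) {Z : Matrix (Fin d) (Fin d) ℝ} (hZ : Z ∈ 𝔰) : rowLift X η * Z ∈ 𝔰 := by
  rw [rowLift, add_mul, smul_mul_assoc, one_mul]
  exact add_mem (Submodule.smul_mem _ _ hZ) (hmul _ (hX.sum_mem η) Z hZ)

lemma isUnit_rowLift (hupper : ∀ A ∈ 𝔰, ∀ j k : Fin d, k ≤ j → A j k = 0)
    (hX : IsCanonicalBasis 𝔰 X) {η : Fin d → ℝ} (hη : η 0 ≠ 0) : IsUnit (rowLift X η) :=
  (isUnit_iff_isUnit_det _).mpr (isUnit_det_smul_one_add hη (hupper _ (hX.sum_mem η)))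

lemma eq_zero_of_vecMul_eq_zero (hupper : ∀ A ∈ 𝔰, ∀ j k : Fin d, k ≤ j → A j k = 0)
    (hmul : ∀ A ∈ 𝔰, ∀ B ∈ 𝔰, A * B ∈ 𝔰) (hX : IsCanonicalBasis 𝔰 X)
    {Z : Matrix (Fin d) (Fin d) ℝ} (hZ : Z ∈ 𝔰) {η : Fin d → ℝ} (hη : η 0 ≠ 0)
    (h : η ᵥ* Z = 0) : Z = 0 := by
  rw [hX.vecMul_eq_rowLift_mul_apply_zero] at h
  have hMZ := hX.eq_zero_of_row_zero (hX.rowLift_mul_mem hmul η hZ) h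
  exact ((hX.isUnit_rowLift hupper hη).mul_right_eq_zero).mp hMZ

lemma exists_mem_vecMul_eq (hupper : ∀ A ∈ 𝔰, ∀ j k : Fin d, k ≤ j → A j k = 0)
    (hmul : ∀ A ∈ 𝔰, ∀ B ∈ 𝔰, A * B ∈ 𝔰) (hX : IsCanonicalBasis 𝔰 X)
    {η : Fin d → ℝ} (hη : η 0 ≠ 0) {v : Fin d → ℝ} (hv : v 0 = 0) :
    ∃ Z ∈ 𝔰, η ᵥ* Z = v := by
  let L : 𝔰 →ₗ[ℝ] 𝔰 :=
    (LinearMap.mulLeft ℝ (rowLift X η)).restrict fun Z hZ => hX.rowLift_mul_mem hmul η hZ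
  have hL : Function.Injective L := fun Z W hZW =>
    Subtype.ext ((hX.isUnit_rowLift hupper hη).mul_left_cancel (congrArg Subtype.val hZW))
  obtain ⟨Z, hZ⟩ := LinearMap.injective_iff_surjective.mp hL ⟨_, hX.sum_mem v⟩
  have hMZ : rowLift X η * Z = ∑ i ∈ Finset.univ.erase 0, v i • X i := congrArg Subtype.val hZ
  refine ⟨Z, Z.2, funext fun k => ?_⟩
  rw [hX.vecMul_eq_rowLift_mul_apply_zero, hMZ, hX.sum_apply_zero]
  split_ifs with hk <;> simp [hk, hv]

end IsCanonicalBasis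

section ShearletGroup

variable {𝔰 : Submodule ℝ (Matrix (Fin d) (Fin d) ℝ)} {X : Fin d → Matrix (Fin d) (Fin d) ℝ}
  {lam : Fin d → ℝ}

lemma vecMul_exp_smul_diagonal_apply_zero (hlam0 : lam 0 = 1) (r : ℝ) (ξ : Fin d → ℝ) :
    (ξ ᵥ* NormedSpace.exp (r • diagonal lam)) 0 = Real.exp r * ξ 0 := by
  rw [exp_smul_diagonal, vecMul_diagonal, hlam0, mul_one, mul_comm]

lemma vecMul_exp_smul_diagonal_apply_zero_ne_zero (hlam0 : lam 0 = 1) (r : ℝ)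
    {ξ : Fin d → ℝ} (hξ : ξ 0 ≠ 0) : (ξ ᵥ* NormedSpace.exp (r • diagonal lam)) 0 ≠ 0 := by
  rw [vecMul_exp_smul_diagonal_apply_zero hlam0]
  exact mul_ne_zero (Real.exp_ne_zero r) hξ

lemma shearlet_vecMul_apply_zero (hupper : ∀ A ∈ 𝔰, ∀ j k : Fin d, k ≤ j → A j k = 0)
    (hlam0 : lam 0 = 1) (ε r : ℝ) {Z : Matrix (Fin d) (Fin d) ℝ} (hZ : Z ∈ 𝔰) (ξ : Fin d → ℝ) :
    (ξ ᵥ* (ε • (NormedSpace.exp (r • diagonal lam) * (1 + Z)))) 0 = ε * Real.exp r * ξ 0 := by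
  rw [vecMul_smul_mul_one_add, Pi.smul_apply, Pi.add_apply,
    vecMul_apply_zero_eq_zero fun k => hupper Z hZ k 0 (Fin.zero_le k), add_zero,
    vecMul_exp_smul_diagonal_apply_zero hlam0, smul_eq_mul, mul_assoc]

lemma vecMul_apply_zero_ne_zero_of_mem_shearletGroupSet
    (hupper : ∀ A ∈ 𝔰, ∀ j k : Fin d, k ≤ j → A j k = 0) (hlam0 : lam 0 = 1)
    {h : Matrix (Fin d) (Fin d) ℝ} (hh : h ∈ shearletGroupSet d lam 𝔰) {ξ : Fin d → ℝ}
    (hξ : ξ 0 ≠ 0) : (ξ ᵥ* h) 0 ≠ 0 := by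
  obtain ⟨ε, r, Z, hZ, hε, rfl⟩ := hh
  have hε0 : ε ≠ 0 := by rcases hε with rfl | rfl <;> norm_num
  rw [shearlet_vecMul_apply_zero hupper hlam0 ε r hZ]
  exact mul_ne_zero (mul_ne_zero hε0 (Real.exp_ne_zero r)) hξ

lemma exists_mem_shearletGroupSet_vecMul_eq
    (hupper : ∀ A ∈ 𝔰, ∀ j k : Fin d, k ≤ j → A j k = 0) (hmul : ∀ A ∈ 𝔰, ∀ B ∈ 𝔰, A * B ∈ 𝔰)
    (hX : IsCanonicalBasis 𝔰 X) (hlam0 : lam 0 = 1) {ξ ξ' : Fin d → ℝ} (hξ : ξ 0 ≠ 0)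
    (hξ' : ξ' 0 ≠ 0) : ∃ h ∈ shearletGroupSet d lam 𝔰, ξ ᵥ* h = ξ' := by
  obtain ⟨ε, r, hε, hεr⟩ := exists_sign_mul_exp_eq (div_ne_zero hξ' hξ)
  have hεε : ε * ε = 1 := by rcases hε with rfl | rfl <;> norm_num
  set η := ξ ᵥ* NormedSpace.exp (r • diagonal lam)
  have hη0 : η 0 = Real.exp r * ξ 0 := vecMul_exp_smul_diagonal_apply_zero hlam0 r ξ
  have hv0 : (ε • ξ' - η) 0 = 0 := by
    rw [eq_div_iff hξ] at hεr
    rw [Pi.sub_apply, Pi.smul_apply, smul_eq_mul, hη0, ← hεr]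
    linear_combination (Real.exp r * ξ 0) * hεε
  obtain ⟨Z, hZ, hηZ⟩ := hX.exists_mem_vecMul_eq hupper hmul
    (vecMul_exp_smul_diagonal_apply_zero_ne_zero hlam0 r hξ) hv0
  refine ⟨_, ⟨ε, r, Z, hZ, hε, rfl⟩, ?_⟩
  rw [vecMul_smul_mul_one_add, hηZ, add_sub_cancel, smul_smul, hεε, one_smul]

lemma eq_of_mem_shearletGroupSet_of_vecMul_eq
    (hupper : ∀ A ∈ 𝔰, ∀ j k : Fin d, k ≤ j → A j k = 0) (hmul : ∀ A ∈ 𝔰, ∀ B ∈ 𝔰, A * B ∈ 𝔰)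
    (hX : IsCanonicalBasis 𝔰 X) (hlam0 : lam 0 = 1) {h h' : Matrix (Fin d) (Fin d) ℝ}
    (hh : h ∈ shearletGroupSet d lam 𝔰) (hh' : h' ∈ shearletGroupSet d lam 𝔰)
    {ξ : Fin d → ℝ} (hξ : ξ 0 ≠ 0) (heq : ξ ᵥ* h = ξ ᵥ* h') : h = h' := by
  obtain ⟨ε, r, Z, hZ, hε, rfl⟩ := hh
  obtain ⟨ε', r', Z', hZ', hε', rfl⟩ := hh'
  have h0 := congrFun heq 0
  rw [shearlet_vecMul_apply_zero hupper hlam0 ε r hZ,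
    shearlet_vecMul_apply_zero hupper hlam0 ε' r' hZ'] at h0
  obtain ⟨rfl, rfl⟩ := sign_mul_exp_injective hε hε' (mul_right_cancel₀ hξ h0)
  have hε0 : ε ≠ 0 := by rcases hε with rfl | rfl <;> norm_num
  set η := ξ ᵥ* NormedSpace.exp (r • diagonal lam)
  have hη0 : η 0 ≠ 0 := vecMul_exp_smul_diagonal_apply_zero_ne_zero hlam0 r hξ
  rw [vecMul_smul_mul_one_add, vecMul_smul_mul_one_add] at heq
  have hZZ' : η ᵥ* Z = η ᵥ* Z' := add_left_cancel (smul_right_injective _ hε0 heq)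
  have := hX.eq_zero_of_vecMul_eq_zero hupper hmul (sub_mem hZ hZ') hη0
    (by rw [vecMul_sub, hZZ', sub_self])
  rw [sub_eq_zero.mp this]

end ShearletGroup

end

theorem statement4_general (d : ℕ) [NeZero d]
    (𝔰 : Submodule ℝ (Matrix (Fin d) (Fin d) ℝ))
    (hupper : ∀ X ∈ 𝔰, ∀ j k : Fin d, k ≤ j → X j k = 0)
    (hmulclosed : ∀ X ∈ 𝔰, ∀ Y ∈ 𝔰, X * Y ∈ 𝔰)
    (X : Fin d → Matrix (Fin d) (Fin d) ℝ)
    (hXmem : ∀ i : Fin d, i ≠ 0 → X i ∈ 𝔰)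
    (hXrow : ∀ i : Fin d, i ≠ 0 → ∀ k : Fin d, X i 0 k = if k = i then 1 else 0)
    (hXspan : ∀ Z ∈ 𝔰, ∃ c : Fin d → ℝ, Z = ∑ i ∈ Finset.univ.erase 0, c i • X i)
    (lam : Fin d → ℝ) (hlam0 : lam 0 = 1) :
    (∀ ξ ξ' : Fin d → ℝ, ξ 0 ≠ 0 → ξ' 0 ≠ 0 →
      ∃! h : Matrix (Fin d) (Fin d) ℝ, h ∈ shearletGroupSet d lam 𝔰 ∧ hᵀ.mulVec ξ = ξ') ∧
    (∀ h ∈ shearletGroupSet d lam 𝔰, ∀ ξ : Fin d → ℝ, ξ 0 ≠ 0 → (hᵀ.mulVec ξ) 0 ≠ 0) ∧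
    ({ξ : Fin d → ℝ | ξ 0 ≠ 0} =
      {ξ : Fin d → ℝ | ∃ h ∈ shearletGroupSet d lam 𝔰, ξ = hᵀ.mulVec (Pi.single 0 1)}) := by
  have hX : IsCanonicalBasis 𝔰 X := ⟨hXmem, hXrow, hXspan⟩
  have hexists {ξ ξ' : Fin d → ℝ} (hξ : ξ 0 ≠ 0) (hξ' : ξ' 0 ≠ 0) :=
    exists_mem_shearletGroupSet_vecMul_eq hupper hmulclosed hX hlam0 hξ hξ'
  have hnonzero : ∀ h ∈ shearletGroupSet d lam 𝔰, ∀ ξ : Fin d → ℝ, ξ 0 ≠ 0 → (ξ ᵥ* h) 0 ≠ 0 :=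
    fun h hh ξ hξ => vecMul_apply_zero_ne_zero_of_mem_shearletGroupSet hupper hlam0 hh hξ
  simp only [mulVec_transpose]
  refine ⟨fun ξ ξ' hξ hξ' => ?_, hnonzero, Set.ext fun ξ => ⟨fun hξ => ?_, ?_⟩⟩
  · obtain ⟨h, hh, rfl⟩ := hexists hξ hξ'
    exact ⟨h, ⟨hh, rfl⟩, fun h' ⟨hh', heq⟩ =>
      eq_of_mem_shearletGroupSet_of_vecMul_eq hupper hmulclosed hX hlam0 hh' hh hξ heq⟩
  · obtain ⟨h, hh, rfl⟩ := hexists (ξ := Pi.single 0 1) (by simp) hξ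
    exact ⟨h, hh, rfl⟩
  · rintro ⟨h, hh, rfl⟩
    exact hnonzero h hh _ (by simp)

/-- For all `ξ, ξ'` with nonzero first coordinate there is exactly one
`h ∈ H` with `hᵀ ξ = ξ'`; moreover `(hᵀ ξ)_1 ≠ 0` whenever `ξ_1 ≠ 0`.  In particular the
dual action of `H` has the single open orbit `O = {ξ : ξ_1 ≠ 0} = {hᵀ e_1 : h ∈ H}`,
on which `H` acts freely. -/
theorem statement4 (d : ℕ) [NeZero d] (hd : 2 ≤ d)
    (𝔰 : Submodule ℝ (Matrix (Fin d) (Fin d) ℝ))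
    (hupper : ∀ X ∈ 𝔰, ∀ j k : Fin d, k ≤ j → X j k = 0)
    (hmulclosed : ∀ X ∈ 𝔰, ∀ Y ∈ 𝔰, X * Y ∈ 𝔰)
    (X : Fin d → Matrix (Fin d) (Fin d) ℝ)
    (hXmem : ∀ i : Fin d, i ≠ 0 → X i ∈ 𝔰)
    (hXrow : ∀ i : Fin d, i ≠ 0 → ∀ k : Fin d, X i 0 k = if k = i then 1 else 0)
    (hXspan : ∀ Z ∈ 𝔰, ∃ c : Fin d → ℝ, Z = ∑ i ∈ Finset.univ.erase 0, c i • X i)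
    (hXindep : LinearIndependent ℝ (fun i : {i : Fin d // i ≠ 0} => X i.1))
    (lam : Fin d → ℝ) (hlam0 : lam 0 = 1)
    (hcomm : ∀ Z ∈ 𝔰, Matrix.diagonal lam * Z - Z * Matrix.diagonal lam ∈ 𝔰) :
    (∀ ξ ξ' : Fin d → ℝ, ξ 0 ≠ 0 → ξ' 0 ≠ 0 →
      ∃! h : Matrix (Fin d) (Fin d) ℝ, h ∈ shearletGroupSet d lam 𝔰 ∧ hᵀ.mulVec ξ = ξ') ∧
    (∀ h ∈ shearletGroupSet d lam 𝔰, ∀ ξ : Fin d → ℝ, ξ 0 ≠ 0 → (hᵀ.mulVec ξ) 0 ≠ 0) ∧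
    ({ξ : Fin d → ℝ | ξ 0 ≠ 0} =
      {ξ : Fin d → ℝ | ∃ h ∈ shearletGroupSet d lam 𝔰, ξ = hᵀ.mulVec (Pi.single 0 1)}) :=
  statement4_general d 𝔰 hupper hmulclosed X hXmem hXrow hXspan lam hlam0
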